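/- arXiv:1803.04660 — 3 statements merged into one kernel-verified Lean document; each statement's English description precedes it below -/
import Mathlib

section
/- Let G be a finite connected simple graph. Define a binary relation ⪯ on the vertex set by u ⪯ x if and only if e(u) = d(u,x) + e(x) (x is a tight upper certificate for u). Then ⪯ is a partial order: it is reflexive, antisymmetric, and transitive. -/
/-- The eccentricity of a vertex `u`: the maximum shortest-path distance from `u`. -/
noncomputable def graphEcc {V : Type*} [Fintype V] (G : SimpleGraph V) (u : V) : ℕ :=
  Finset.univ.sup (G.dist u)

theorem dist_le_graphEcc {V : Type*} [Fintype V] (G : SimpleGraph V) (u v : V) :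
    G.dist u v ≤ graphEcc G u :=
  Finset.le_sup (Finset.mem_univ v)

theorem SimpleGraph.Connected.graphEcc_le_dist_add {V : Type*} [Fintype V] {G : SimpleGraph V}
    (hG : G.Connected) (u y : V) : graphEcc G u ≤ G.dist u y + graphEcc G y :=
  Finset.sup_le fun v _ ↦ calc
    G.dist u v ≤ G.dist u y + G.dist y v := hG.dist_triangle
    _ ≤ G.dist u y + graphEcc G y := Nat.add_le_add_left (dist_le_graphEcc G y v) _

theorem tightUpperCertificate_partialOrder {V : Type*} [Fintype V] (G : SimpleGraph V)
    (hG : G.Connected) :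
    (∀ u : V, graphEcc G u = G.dist u u + graphEcc G u) ∧
    (∀ u x : V, graphEcc G u = G.dist u x + graphEcc G x →
      graphEcc G x = G.dist x u + graphEcc G u → u = x) ∧
    (∀ u x y : V, graphEcc G u = G.dist u x + graphEcc G x →
      graphEcc G x = G.dist x y + graphEcc G y →
      graphEcc G u = G.dist u y + graphEcc G y) := by
  refine ⟨fun u ↦ by rw [SimpleGraph.dist_self, zero_add], fun u x hux hxu ↦ ?_,
    fun u x y hux hxy ↦ ?_⟩
  · have hdist : G.dist u x = 0 := by omega
    exact hG.dist_eq_zero_iff.mp hdist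
  · refine le_antisymm (hG.graphEcc_le_dist_add u y) ?_
    calc G.dist u y + graphEcc G y
        ≤ G.dist u x + G.dist x y + graphEcc G y := Nat.add_le_add_right hG.dist_triangle _
      _ = graphEcc G u := by omega
end

section
/- Let G be a finite connected simple graph, let U be any set of vertices, and let S_U be the set of vertices that have no tight upper certificate in U (i.e., v ∈ S_U iff there is no x ∈ U with e(v) = d(v,x) + e(x)). If v ∈ S_U has minimum eccentricity among vertices of S_U, then v has no tight upper certificate other than itself (i.e., e(v) = d(v,x) + e(x) with x a vertex implies x = v). -/
namespace SimpleGraph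

variable {V : Type*} [Fintype V] (G : SimpleGraph V)

def IsTightUpperCertificate (u x : V) : Prop :=
  graphEcc G u = G.dist u x + graphEcc G x

variable {G}

lemma Connected.graphEcc_le_dist_add_s3 (hG : G.Connected) (u y : V) :
    graphEcc G u ≤ G.dist u y + graphEcc G y :=
  Finset.sup_le fun z _ =>
    calc G.dist u z ≤ G.dist u y + G.dist y z := hG.dist_triangle
      _ ≤ G.dist u y + graphEcc G y := Nat.add_le_add_left (Finset.le_sup (Finset.mem_univ z)) _

lemma IsTightUpperCertificate.trans (hG : G.Connected) {u x y : V}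
    (hux : G.IsTightUpperCertificate u x) (hxy : G.IsTightUpperCertificate x y) :
    G.IsTightUpperCertificate u y := by
  refine le_antisymm (hG.graphEcc_le_dist_add_s3 u y) ?_
  calc G.dist u y + graphEcc G y ≤ G.dist u x + G.dist x y + graphEcc G y :=
        Nat.add_le_add_right hG.dist_triangle _
    _ = graphEcc G u := by rw [hux, hxy, Nat.add_assoc]

lemma IsTightUpperCertificate.graphEcc_lt (hG : G.Connected) {u x : V}
    (hux : G.IsTightUpperCertificate u x) (hne : x ≠ u) : graphEcc G x < graphEcc G u := by
  have hpos : 0 < G.dist u x := hG.pos_dist_of_ne hne.symm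
  rw [hux]
  omega

end SimpleGraph

open SimpleGraph in
theorem minEcc_no_other_tight_upper_certificate {V : Type*} [Fintype V] (G : SimpleGraph V)
    (hG : G.Connected) (U : Set V) (SU : Set V)
    (hSU : SU = {w : V | ¬ ∃ x ∈ U, graphEcc G w = G.dist w x + graphEcc G x})
    (v : V) (hv : v ∈ SU) (hmin : ∀ w ∈ SU, graphEcc G v ≤ graphEcc G w) :
    ∀ x : V, graphEcc G v = G.dist v x + graphEcc G x → x = v := by
  intro x hvx
  by_contra hne
  subst hSU
  have hxSU : ¬ ∃ y ∈ U, G.IsTightUpperCertificate x y := fun ⟨y, hyU, hxy⟩ =>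
    hv ⟨y, hyU, IsTightUpperCertificate.trans hG hvx hxy⟩
  exact (hmin x hxSU).not_gt (IsTightUpperCertificate.graphEcc_lt hG hvx hne)
end

section
/- Let G be a finite connected simple graph, let U be a nonempty set of vertices, and set e^U(u) = min_{x ∈ U} (d(u,x) + e(x)). For any vertex u and any vertex x that is a tight upper certificate for u (i.e., e(u) = d(u,x) + e(x)), one has e^U(u) − e(u) ≤ 2·d(x,U), where d(x,U) = min_{y ∈ U} d(x,y). -/
namespace SimpleGraph

variable {V : Type*} [Fintype V] {G : SimpleGraph V}

theorem dist_le_graphEcc (G : SimpleGraph V) (u v : V) : G.dist u v ≤ graphEcc G u :=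
  Finset.le_sup (Finset.mem_univ v)

theorem Connected.graphEcc_le_dist_add_graphEcc (hG : G.Connected) (x y : V) :
    graphEcc G y ≤ G.dist y x + graphEcc G x :=
  Finset.sup_le fun v _ =>
    hG.dist_triangle.trans (Nat.add_le_add_left (G.dist_le_graphEcc x v) _)

/-- Routing through a vertex `y ∈ U` nearest to `x` pays the detour `d(x, y)` twice: once in
the distance from `u` to `y`, once in the eccentricity of `y`. -/
theorem Connected.inf'_dist_add_graphEcc_le (hG : G.Connected) {U : Finset V}
    (hU : U.Nonempty) (u x : V) :
    U.inf' hU (fun y => G.dist u y + graphEcc G y) ≤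
      G.dist u x + graphEcc G x + 2 * U.inf' hU (fun y => G.dist x y) := by
  obtain ⟨y, hyU, hy⟩ := Finset.exists_mem_eq_inf' hU (fun y => G.dist x y)
  rw [hy]
  calc U.inf' hU (fun y => G.dist u y + graphEcc G y)
      ≤ G.dist u y + graphEcc G y := Finset.inf'_le _ hyU
    _ ≤ (G.dist u x + G.dist x y) + (G.dist y x + graphEcc G x) :=
        Nat.add_le_add hG.dist_triangle (hG.graphEcc_le_dist_add_graphEcc x y)
    _ = G.dist u x + graphEcc G x + 2 * G.dist x y := by rw [G.dist_comm (u := y)]; ring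

end SimpleGraph

theorem upper_certificate_error {V : Type*} [Fintype V] (G : SimpleGraph V)
    (hG : G.Connected) (U : Finset V) (hU : U.Nonempty) (u x : V)
    (hx : graphEcc G u = G.dist u x + graphEcc G x) :
    (U.inf' hU (fun y => G.dist u y + graphEcc G y) : ℤ) - (graphEcc G u : ℤ) ≤
      2 * (U.inf' hU (fun y => G.dist x y) : ℤ) := by
  have h := hG.inf'_dist_add_graphEcc_le hU u x
  rw [← hx] at h
  have cast_inf' (f : V → ℕ) : ((U.inf' hU f : ℕ) : ℤ) = U.inf' hU (fun y => (f y : ℤ)) :=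
    Finset.apply_inf'_eq_inf'_comp hU _ Nat.cast_min
  simp only [← Nat.cast_add, ← cast_inf', sub_le_iff_le_add']
  exact_mod_cast h
end
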